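/- Two maximal orbit elements σ = (x₁+λ₁, x₂+λ₂x₁^{p−1}+g₂, …, x_n+λ_n(x₁⋯x_{n−1})^{p−1}+g_n) and τ = (x₁+μ₁, …, x_n+μ_n(x₁⋯x_{n−1})^{p−1}+h_n) of 𝔹_n(𝔽_p), with λᵢ, μᵢ ∈ 𝔽_p* and gᵢ, hᵢ ∈ R_{i−1}⁻, are conjugate in 𝔹_n(𝔽_p) if and only if λᵢ = μᵢ for all 1 ≤ i ≤ n. -/
import Mathlib

set_option linter.unusedSectionVars false
set_option linter.unusedVariables false
set_option maxHeartbeats 1000000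


/-- A permutation of `𝔽_p^n` is strictly triangular if its `i`-th component is
`x_i + g_i(x_1, …, x_{i-1})`, i.e. `σ x i - x i` depends only on the coordinates `j < i`
(every function of finitely many `𝔽_p`-variables being polynomial). -/
def StrictlyTriangular (p n : ℕ) (σ : Equiv.Perm (Fin n → ZMod p)) : Prop :=
  ∀ x y : Fin n → ZMod p, ∀ i : Fin n, (∀ j : Fin n, j < i → x j = y j) →
    σ x i - x i = σ y i - y i

/-- `σ` fixes the first `m` coordinates of `𝔽_p^n`. -/
def FixesFirst (p n m : ℕ) (σ : Equiv.Perm (Fin n → ZMod p)) : Prop :=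
  ∀ x : Fin n → ZMod p, ∀ i : Fin n, (i : ℕ) < m → σ x i = x i

open MvPolynomial in
/-- `g` is the reduced polynomial representation of `σ`: `σ = (x₁+g₁, …, x_n+g_n)` with
`gᵢ ∈ 𝔽_p[x₁,…,x_{i-1}]` of degree at most `p − 1` in each variable. -/
def IsReducedRep (p n : ℕ) (σ : Equiv.Perm (Fin n → ZMod p))
    (g : Fin n → MvPolynomial (Fin n) (ZMod p)) : Prop :=
  ∀ i : Fin n,
    (∀ j : Fin n, ¬ j < i → MvPolynomial.degreeOf j (g i) = 0) ∧
    (∀ j : Fin n, MvPolynomial.degreeOf j (g i) ≤ p - 1) ∧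
    (∀ x : Fin n → ZMod p, σ x i = x i + MvPolynomial.eval x (g i))

/-- The exponent vector of the monomial `x₁^{p-1} ⋯ x_{i-1}^{p-1}`. -/
noncomputable def topMonomial (p n : ℕ) (i : Fin n) : Fin n →₀ ℕ :=
  ∑ j ∈ Finset.univ.filter (· < i), Finsupp.single j (p - 1)

namespace MaxOrbitAux

open MvPolynomial Finset

variable {p n : ℕ} [Fact p.Prime]

lemma eval_agree (f : MvPolynomial (Fin n) (ZMod p)) {x y : Fin n → ZMod p}
    (h : ∀ j, f.degreeOf j ≠ 0 → x j = y j) :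
    MvPolynomial.eval x f = MvPolynomial.eval y f := by
  rw [eval_eq, eval_eq]
  refine Finset.sum_congr rfl fun d hd => ?_
  congr 1
  refine Finset.prod_congr rfl fun j hj => ?_
  have hdj : d j ≠ 0 := Finsupp.mem_support_iff.mp hj
  have hde : f.degreeOf j ≠ 0 := by
    rw [degreeOf_eq_sup]
    intro h0
    exact hdj (Nat.le_zero.mp (h0 ▸ Finset.le_sup (f := fun m => m j) hd))
  rw [h j hde]

lemma st_one : StrictlyTriangular p n 1 := fun x y i _ => by simp

lemma st_mul {σ τ : Equiv.Perm (Fin n → ZMod p)}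
    (hσ : StrictlyTriangular p n σ) (hτ : StrictlyTriangular p n τ) :
    StrictlyTriangular p n (σ * τ) := by
  intro x y i hxy
  have h1 : ∀ j : Fin n, j < i → τ x j = τ y j := by
    intro j hj
    have h2 := hτ x y j fun k hk => hxy k (hk.trans hj)
    have h3 := hxy j hj
    linear_combination h2 + h3
  have h4 := hσ (τ x) (τ y) i h1
  have h5 := hτ x y i hxy
  simp only [Equiv.Perm.mul_apply]
  linear_combination h4 + h5

lemma st_pow {σ : Equiv.Perm (Fin n → ZMod p)} (hσ : StrictlyTriangular p n σ) (k : ℕ) :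
    StrictlyTriangular p n (σ ^ k) := by
  induction k with
  | zero => simpa using st_one
  | succ k ih => rw [pow_succ]; exact st_mul ih hσ

lemma st_agree {σ : Equiv.Perm (Fin n → ZMod p)} (hσ : StrictlyTriangular p n σ)
    {x y : Fin n → ZMod p} {i : Fin n} (hxy : ∀ j : Fin n, j < i → x j = y j) :
    ∀ j : Fin n, j < i → σ x j = σ y j := by
  intro j hj
  have h2 := hσ x y j fun k hk => hxy k (hk.trans hj)
  have h3 := hxy j hj
  linear_combination h2 + h3

lemma st_of_rep {σ : Equiv.Perm (Fin n → ZMod p)} {g : Fin n → MvPolynomial (Fin n) (ZMod p)}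
    (hg : IsReducedRep p n σ g) : StrictlyTriangular p n σ := by
  intro x y i hxy
  rw [(hg i).2.2 x, (hg i).2.2 y, add_sub_cancel_left, add_sub_cancel_left]
  apply eval_agree
  intro j hdeg
  by_cases hj : j < i
  · exact hxy j hj
  · exact absurd ((hg i).1 j hj) hdeg

lemma pow_fix {σ : Equiv.Perm (Fin n → ZMod p)} {m : ℕ}
    (hfix : ∀ x (j : Fin n), (j : ℕ) < m → σ x j = x j) :
    ∀ (k : ℕ) (x) (j : Fin n), (j : ℕ) < m → (σ ^ k) x j = x j := by
  intro k
  induction k with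
  | zero => intro x j _; simp
  | succ k ih =>
    intro x j hj
    rw [pow_succ, Equiv.Perm.mul_apply, ih (σ x) j hj, hfix x j hj]

lemma pow_shift {σ : Equiv.Perm (Fin n → ZMod p)} {i : Fin n} {c : ZMod p}
    (hfix : ∀ x (j : Fin n), (j : ℕ) < (i : ℕ) → σ x j = x j)
    (hshift : ∀ x, σ x i = x i + c) :
    ∀ (k : ℕ) (x), (σ ^ k) x i = x i + (k : ZMod p) * c := by
  intro k
  induction k with
  | zero => intro x; simp
  | succ k ih =>
    intro x
    rw [pow_succ, Equiv.Perm.mul_apply, ih (σ x), hshift x]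
    push_cast
    ring

lemma topMonomial_apply (i j : Fin n) :
    topMonomial p n i j = if j < i then p - 1 else 0 := by
  classical
  rw [topMonomial, Finsupp.finset_sum_apply]
  simp only [Finsupp.single_apply]
  rw [Finset.sum_ite_eq' (Finset.univ.filter (· < i)) j fun _ => p - 1]
  simp

lemma sum_pow_eq_neg_one : ∑ a : ZMod p, a ^ (p - 1) = -1 := by
  have hp : p.Prime := Fact.out
  have h1 : ∀ a : ZMod p, a ^ (p - 1) = if a = 0 then 0 else 1 := by
    intro a
    split_ifs with ha
    · subst ha; exact zero_pow (Nat.sub_ne_zero_of_lt hp.one_lt)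
    · exact ZMod.pow_card_sub_one_eq_one ha
  simp only [h1]
  rw [Finset.sum_ite, Finset.sum_const_zero, Finset.sum_const, zero_add, nsmul_eq_mul, mul_one]
  have hcard : (Finset.univ.filter fun a : ZMod p => ¬ a = 0).card = p - 1 := by
    rw [Finset.filter_not, Finset.card_sdiff_of_subset (Finset.filter_subset _ _)]
    rw [Finset.filter_eq', if_pos (Finset.mem_univ _), Finset.card_singleton, Finset.card_univ,
      ZMod.card]
  rw [hcard, Nat.cast_sub hp.one_lt.le, ZMod.natCast_self, Nat.cast_one, zero_sub]


lemma card_subtype_lt (i : Fin n) : Fintype.card {j : Fin n // j < i} = (i : ℕ) := by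
  rw [Fintype.card_subtype]
  have h : Finset.univ.filter (fun j : Fin n => j < i) = Finset.Iio i := by
    ext j; simp
  rw [h, Fin.card_Iio]

lemma box_sum (i : Fin n) (f : MvPolynomial (Fin n) (ZMod p))
    (h0 : ∀ j : Fin n, ¬ j < i → f.degreeOf j = 0)
    (h1 : ∀ j : Fin n, f.degreeOf j ≤ p - 1) (z : Fin n → ZMod p) :
    ∑ w : {j : Fin n // j < i} → ZMod p,
        MvPolynomial.eval (fun j => if h : j < i then w ⟨j, h⟩ else z j) f
      = (-1) ^ (i : ℕ) * MvPolynomial.coeff (topMonomial p n i) f := by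
  classical
  have hp : p.Prime := Fact.out
  have hsupp : ∀ d ∈ f.support, ∀ j : Fin n, ¬ j < i → d j = 0 := by
    intro d hd j hj
    have h := h0 j hj
    rw [degreeOf_eq_sup] at h
    exact Nat.le_zero.mp (h ▸ Finset.le_sup (f := fun m => m j) hd)
  have hle : ∀ d ∈ f.support, ∀ j : Fin n, d j ≤ p - 1 := by
    intro d hd j
    have h := h1 j
    rw [degreeOf_eq_sup] at h
    exact le_trans (Finset.le_sup (f := fun m => m j) hd) h
  simp only [eval_eq']
  rw [Finset.sum_comm]
  have key : ∀ d ∈ f.support,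
      (∑ w : {j : Fin n // j < i} → ZMod p,
        f.coeff d * ∏ j : Fin n, (if h : j < i then w ⟨j, h⟩ else z j) ^ d j)
      = if d = topMonomial p n i then f.coeff d * (-1) ^ (i : ℕ) else 0 := by
    intro d hd
    have hprod : ∀ w : {j : Fin n // j < i} → ZMod p,
        (∏ j : Fin n, (if h : j < i then w ⟨j, h⟩ else z j) ^ d j)
        = ∏ j' : {j : Fin n // j < i}, w j' ^ d j'.1 := by
      intro w
      have hsub : ∀ j ∈ Finset.univ, j ∉ Finset.univ.filter (fun j : Fin n => j < i) →
          (if h : j < i then w ⟨j, h⟩ else z j) ^ d j = 1 := by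
        intro j _ hj
        simp only [Finset.mem_filter, Finset.mem_univ, true_and] at hj
        rw [hsupp d hd j hj, pow_zero]
      rw [← Finset.prod_subset (Finset.filter_subset _ Finset.univ) hsub]
      rw [Finset.prod_subtype (p := fun j : Fin n => j < i)
        (Finset.univ.filter (fun j : Fin n => j < i))
        (by intro j; simp) (fun j => (if h : j < i then w ⟨j, h⟩ else z j) ^ d j)]
      refine Finset.prod_congr rfl fun j' _ => ?_
      rw [dif_pos j'.2]
    calc (∑ w : {j : Fin n // j < i} → ZMod p,
            f.coeff d * ∏ j : Fin n, (if h : j < i then w ⟨j, h⟩ else z j) ^ d j)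
        = f.coeff d * ∑ w : {j : Fin n // j < i} → ZMod p,
            ∏ j' : {j : Fin n // j < i}, w j' ^ d j'.1 := by
          rw [Finset.mul_sum]
          exact Finset.sum_congr rfl fun w _ => by rw [hprod w]
      _ = f.coeff d * ∏ j' : {j : Fin n // j < i}, ∑ a : ZMod p, a ^ d j'.1 := by
          congr 1
          rw [Finset.prod_univ_sum (fun _ : {j : Fin n // j < i} => (Finset.univ : Finset (ZMod p)))
            (fun j' a => a ^ d j'.1), Fintype.piFinset_univ]
      _ = if d = topMonomial p n i then f.coeff d * (-1) ^ (i : ℕ) else 0 := by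
          split_ifs with htop
          · congr 1
            subst htop
            have hval : ∀ j' : {j : Fin n // j < i}, topMonomial p n i j'.1 = p - 1 := by
              intro j'; rw [topMonomial_apply, if_pos j'.2]
            calc (∏ j' : {j : Fin n // j < i}, ∑ a : ZMod p, a ^ topMonomial p n i j'.1)
                = ∏ j' : {j : Fin n // j < i}, (-1 : ZMod p) := by
                  refine Finset.prod_congr rfl fun j' _ => ?_
                  rw [hval j', sum_pow_eq_neg_one]
              _ = (-1) ^ (i : ℕ) := by
                  rw [Finset.prod_const, Finset.card_univ, card_subtype_lt]
          · -- some coordinate has d j < p - 1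
            have hex : ∃ j' : {j : Fin n // j < i}, d j'.1 ≠ p - 1 := by
              by_contra hall
              push_neg at hall
              apply htop
              ext j
              rw [topMonomial_apply]
              by_cases hj : j < i
              · rw [if_pos hj]; exact hall ⟨j, hj⟩
              · rw [if_neg hj]; exact hsupp d hd j hj
            obtain ⟨j', hj'⟩ := hex
            have hlt : d j'.1 < p - 1 := lt_of_le_of_ne (hle d hd j'.1) hj'
            have hzero : (∑ a : ZMod p, a ^ d j'.1) = 0 := by
              have := FiniteField.sum_pow_lt_card_sub_one (K := ZMod p) (d j'.1)
                (by rw [ZMod.card]; exact hlt)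
              exact this
            rw [Finset.prod_eq_zero (Finset.mem_univ j') hzero, mul_zero]
  rw [Finset.sum_congr rfl key]
  rw [Finset.sum_ite_eq' f.support (topMonomial p n i)
    (fun d => f.coeff d * (-1) ^ (i : ℕ))]
  split_ifs with htop
  · ring
  · rw [MvPolynomial.notMem_support_iff.mp htop, mul_zero]


/-- The conjugation-invariant constant attached to level `i`. -/
noncomputable def cc (g : Fin n → MvPolynomial (Fin n) (ZMod p)) (i : Fin n) : ZMod p :=
  (-1) ^ (i : ℕ) * MvPolynomial.coeff (topMonomial p n i) (g i)

lemma cc_ne_zero {g : Fin n → MvPolynomial (Fin n) (ZMod p)}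
    (hlam : ∀ i : Fin n, MvPolynomial.coeff (topMonomial p n i) (g i) ≠ 0) (i : Fin n) :
    cc g i ≠ 0 :=
  mul_ne_zero (pow_ne_zero _ (neg_ne_zero.mpr one_ne_zero)) (hlam i)

lemma orbit_inj {σ : Equiv.Perm (Fin n → ZMod p)} {g : Fin n → MvPolynomial (Fin n) (ZMod p)}
    (hlam : ∀ i : Fin n, MvPolynomial.coeff (topMonomial p n i) (g i) ≠ 0)
    {i : ℕ}
    (H : ∀ j : ℕ, j < i →
      (∀ x (j' : Fin n), (j' : ℕ) < j → (σ ^ p ^ j) x j' = x j') ∧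
      (∀ (hj : j < n) (x), (σ ^ p ^ j) x ⟨j, hj⟩ = x ⟨j, hj⟩ + cc g ⟨j, hj⟩))
    (hin : i ≤ n) (x : Fin n → ZMod p) :
    ∀ m m' : ℕ, m < p ^ i → m' < p ^ i →
      (∀ j : Fin n, (j : ℕ) < i → (σ ^ m) x j = (σ ^ m') x j) → m = m' := by
  have hp : p.Prime := Fact.out
  have main : ∀ a b : ℕ, a < b → b < p ^ i →
      (∀ j : Fin n, (j : ℕ) < i → (σ ^ a) x j = (σ ^ b) x j) → False := by
    intro a b hab hb hagree
    set d := b - a with hd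
    have hd0 : d ≠ 0 := Nat.sub_ne_zero_of_lt hab
    set j0 := d.factorization p with hj0
    set u := d / p ^ j0 with hu
    have hdu : p ^ j0 * u = d := Nat.ordProj_mul_ordCompl_eq_self d p
    have hpu : ¬ p ∣ u := Nat.not_dvd_ordCompl hp hd0
    have hj0i : j0 < i := by
      have h1 : p ^ j0 ≤ d := Nat.ordProj_le p hd0
      have h2 : d < p ^ i := lt_of_le_of_lt (Nat.sub_le _ _) hb
      exact (Nat.pow_lt_pow_iff_right hp.one_lt).mp (lt_of_le_of_lt h1 h2)
    have hj0n : j0 < n := lt_of_lt_of_le hj0i hin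
    have hfix := (H j0 hj0i).1
    have hshift := (H j0 hj0i).2 hj0n
    have hb' : σ ^ b = (σ ^ p ^ j0) ^ u * σ ^ a := by
      rw [← pow_mul, ← pow_add, hdu]
      congr 1
      omega
    have hps := pow_shift hfix hshift u ((σ ^ a) x)
    have hcoord := hagree ⟨j0, hj0n⟩ hj0i
    rw [hb', Equiv.Perm.mul_apply, hps] at hcoord
    have hu0 : (u : ZMod p) ≠ 0 := fun h => hpu ((ZMod.natCast_eq_zero_iff u p).mp h)
    have hcc : cc g ⟨j0, hj0n⟩ ≠ 0 := cc_ne_zero hlam _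
    have : (u : ZMod p) * cc g ⟨j0, hj0n⟩ = 0 := by linear_combination hcoord.symm
    exact mul_ne_zero hu0 hcc this
  intro m m' hm hm' hagree
  rcases lt_trichotomy m m' with h | h | h
  · exact (main m m' h hm' hagree).elim
  · exact h
  · exact (main m' m h hm fun j hj => (hagree j hj).symm).elim

theorem key {σ : Equiv.Perm (Fin n → ZMod p)} {g : Fin n → MvPolynomial (Fin n) (ZMod p)}
    (hg : IsReducedRep p n σ g)
    (hlam : ∀ i : Fin n, MvPolynomial.coeff (topMonomial p n i) (g i) ≠ 0) :
    ∀ i : ℕ,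
      (∀ x (j : Fin n), (j : ℕ) < i → (σ ^ p ^ i) x j = x j) ∧
      (∀ (hi : i < n) (x), (σ ^ p ^ i) x ⟨i, hi⟩ = x ⟨i, hi⟩ + cc g ⟨i, hi⟩) := by
  have hp : p.Prime := Fact.out
  intro i
  induction i using Nat.strong_induction_on with
  | _ i IH =>
  have hpowsucc : ∀ j : ℕ, σ ^ p ^ (j + 1) = (σ ^ p ^ j) ^ p := by
    intro j; rw [← pow_mul, pow_succ]
  have hfixnext : ∀ j : ℕ, j < i → ∀ x (j' : Fin n), (j' : ℕ) < j + 1 →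
      (σ ^ p ^ (j + 1)) x j' = x j' := by
    intro j hj x j' hj'
    rw [hpowsucc j]
    by_cases hjn : j < n
    · have hfix := (IH j hj).1
      have hshift := (IH j hj).2 hjn
      rcases Nat.lt_succ_iff_lt_or_eq.mp hj' with h | h
      · exact pow_fix hfix p x j' h
      · have hj'eq : j' = ⟨j, hjn⟩ := Fin.ext h
        rw [hj'eq, pow_shift hfix hshift p x, ZMod.natCast_self, zero_mul, add_zero]
    · have hlt : (j' : ℕ) < j := lt_of_lt_of_le j'.isLt (Nat.le_of_not_lt hjn)
      exact pow_fix (IH j hj).1 p x j' hlt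
  have hfixi : ∀ x (j : Fin n), (j : ℕ) < i → (σ ^ p ^ i) x j = x j := by
    intro x j hj
    have h1 : σ ^ p ^ i = (σ ^ p ^ ((j : ℕ) + 1)) ^ p ^ (i - ((j : ℕ) + 1)) := by
      rw [← pow_mul, ← pow_add]
      congr 2
      omega
    rw [h1]
    exact pow_fix (fun x' j' hj' => hfixnext (j : ℕ) hj x' j' hj') _ x j (Nat.lt_succ_self _)
  refine ⟨hfixi, ?_⟩
  intro hi x
  set i' : Fin n := ⟨i, hi⟩ with hi'
  -- telescoping
  have htel : ∀ N : ℕ, (σ ^ N) x i' = x i' +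
      ∑ m ∈ Finset.range N, MvPolynomial.eval ((σ ^ m) x) (g i') := by
    intro N
    induction N with
    | zero => simp
    | succ N ihN =>
      rw [pow_succ', Equiv.Perm.mul_apply, (hg i').2.2 ((σ ^ N) x), ihN, Finset.sum_range_succ]
      ring
  -- counting
  have hinj := orbit_inj hlam (fun j hj => IH j hj) hi.le x
  set emb : ℕ → ({j : Fin n // j < i'} → ZMod p) :=
    fun m => fun j' => (σ ^ m) x j'.1 with hemb
  have hinj2 : ∀ m ∈ Finset.range (p ^ i), ∀ m' ∈ Finset.range (p ^ i),
      emb m = emb m' → m = m' := by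
    intro m hm m' hm' he
    refine hinj m m' (Finset.mem_range.mp hm) (Finset.mem_range.mp hm') fun j hj => ?_
    exact congrFun he ⟨j, hj⟩
  have hcard : Fintype.card ({j : Fin n // j < i'} → ZMod p) = p ^ i := by
    rw [Fintype.card_fun, ZMod.card, card_subtype_lt]
  have himg : (Finset.range (p ^ i)).image emb = Finset.univ := by
    apply Finset.eq_univ_of_card
    rw [Finset.card_image_of_injOn
      (fun m hm m' hm' he => hinj2 m (Finset.mem_coe.mp hm) m' (Finset.mem_coe.mp hm') he),
      Finset.card_range, hcard]
  have hsum : ∑ m ∈ Finset.range (p ^ i), MvPolynomial.eval ((σ ^ m) x) (g i')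
      = ∑ w : {j : Fin n // j < i'} → ZMod p,
          MvPolynomial.eval (fun j => if h : j < i' then w ⟨j, h⟩ else x j) (g i') := by
    rw [← himg, Finset.sum_image hinj2]
    refine Finset.sum_congr rfl fun m hm => ?_
    apply eval_agree
    intro j hdeg
    have hji : j < i' := by
      by_contra hjc
      exact hdeg ((hg i').1 j hjc)
    rw [dif_pos hji]
  have hbox := box_sum i' (g i') (hg i').1 (fun j => (hg i').2.1 j) x
  rw [htel (p ^ i), hsum, hbox]
  rfl


lemma key_shift {σ : Equiv.Perm (Fin n → ZMod p)} {g : Fin n → MvPolynomial (Fin n) (ZMod p)}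
    (hg : IsReducedRep p n σ g)
    (hlam : ∀ i : Fin n, MvPolynomial.coeff (topMonomial p n i) (g i) ≠ 0) (i : Fin n) :
    ∀ x, (σ ^ p ^ (i : ℕ)) x i = x i + cc g i := by
  have h := (key hg hlam (i : ℕ)).2 i.isLt
  simpa using h

lemma pow_pn_eq_one {σ : Equiv.Perm (Fin n → ZMod p)} {g : Fin n → MvPolynomial (Fin n) (ZMod p)}
    (hg : IsReducedRep p n σ g)
    (hlam : ∀ i : Fin n, MvPolynomial.coeff (topMonomial p n i) (g i) ≠ 0) :
    σ ^ p ^ n = 1 := by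
  refine Equiv.ext fun x => ?_
  funext j
  simpa using (key hg hlam n).1 x j j.isLt

lemma pow_mod_pn {σ : Equiv.Perm (Fin n → ZMod p)} (h1 : σ ^ p ^ n = 1) (a : ℕ) :
    σ ^ a = σ ^ (a % p ^ n) := by
  conv_lhs => rw [← Nat.div_add_mod a (p ^ n)]
  rw [pow_add, pow_mul, h1, one_pow, one_mul]

lemma orbit_trans {σ : Equiv.Perm (Fin n → ZMod p)} {g : Fin n → MvPolynomial (Fin n) (ZMod p)}
    (hg : IsReducedRep p n σ g)
    (hlam : ∀ i : Fin n, MvPolynomial.coeff (topMonomial p n i) (g i) ≠ 0)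
    (x y : Fin n → ZMod p) : ∃ m, m < p ^ n ∧ (σ ^ m) x = y := by
  classical
  have hinj := orbit_inj hlam (fun j hj => key hg hlam j) le_rfl x
  set emb : ℕ → (Fin n → ZMod p) := fun m => (σ ^ m) x with hembd
  have hinj2 : ∀ m ∈ Finset.range (p ^ n), ∀ m' ∈ Finset.range (p ^ n),
      emb m = emb m' → m = m' := by
    intro m hm m' hm' he
    exact hinj m m' (Finset.mem_range.mp hm) (Finset.mem_range.mp hm')
      fun j _ => congrFun he j
  have hcard : Fintype.card (Fin n → ZMod p) = p ^ n := by
    rw [Fintype.card_fun, ZMod.card, Fintype.card_fin]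
  have himg : (Finset.range (p ^ n)).image emb = Finset.univ := by
    apply Finset.eq_univ_of_card
    rw [Finset.card_image_of_injOn
      (fun m hm m' hm' he => hinj2 m (Finset.mem_coe.mp hm) m' (Finset.mem_coe.mp hm') he),
      Finset.card_range, hcard]
  have hy : y ∈ (Finset.range (p ^ n)).image emb := by rw [himg]; exact Finset.mem_univ y
  rcases Finset.mem_image.mp hy with ⟨m, hm, hme⟩
  exact ⟨m, Finset.mem_range.mp hm, hme⟩

/-- Decomposition of `σ ^ a` applied to `0` at level `i`. -/
lemma decomp {σ : Equiv.Perm (Fin n → ZMod p)} {g : Fin n → MvPolynomial (Fin n) (ZMod p)}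
    (hg : IsReducedRep p n σ g)
    (hlam : ∀ i : Fin n, MvPolynomial.coeff (topMonomial p n i) (g i) ≠ 0)
    (a : ℕ) (i : Fin n) :
    (∀ j : Fin n, j < i → (σ ^ a) 0 j = (σ ^ (a % p ^ (i : ℕ))) 0 j) ∧
    (σ ^ a) 0 i = (σ ^ (a % p ^ (i : ℕ))) 0 i
      + ((a / p ^ (i : ℕ) : ℕ) : ZMod p) * cc g i := by
  set r := a % p ^ (i : ℕ) with hr
  set t := a / p ^ (i : ℕ) with ht
  have hsplit : σ ^ a = σ ^ r * (σ ^ p ^ (i : ℕ)) ^ t := by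
    rw [← pow_mul, ← pow_add]
    congr 1
    have h2 : p ^ (i : ℕ) * t + r = a := by rw [hr, ht]; exact Nat.div_add_mod a _
    rw [← h2, Nat.add_comm]
  have hfix := (key hg hlam (i : ℕ)).1
  have hshift := key_shift hg hlam i
  set z := ((σ ^ p ^ (i : ℕ)) ^ t) (0 : Fin n → ZMod p) with hz
  have hz_below : ∀ j : Fin n, j < i → z j = (0 : Fin n → ZMod p) j :=
    fun j hj => pow_fix hfix t 0 j hj
  have hz_i : z i = (t : ZMod p) * cc g i := by
    have h := pow_shift hfix hshift t 0
    simpa using h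
  have hst : StrictlyTriangular p n (σ ^ r) := st_pow (st_of_rep hg) r
  constructor
  · intro j hj
    rw [hsplit, Equiv.Perm.mul_apply]
    exact st_agree hst hz_below j hj
  · rw [hsplit, Equiv.Perm.mul_apply]
    have h1 := hst z 0 i hz_below
    simp only [Pi.zero_apply] at h1 hz_i
    linear_combination h1 + hz_i


end MaxOrbitAux

open MaxOrbitAux

/-- Two maximal orbit elements `σ = (x₁+λ₁, …, x_n+λ_n(x₁⋯x_{n−1})^{p−1}+g_n)` and
`τ = (x₁+μ₁, …, x_n+μ_n(x₁⋯x_{n−1})^{p−1}+h_n)` of `𝔹_n(𝔽_p)` (with leading coefficients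
`λᵢ, μᵢ ∈ 𝔽_p*`) are conjugate in `𝔹_n(𝔽_p)` if and only if `λᵢ = μᵢ` for all `i`. -/
theorem conjugate_iff_leading_coeffs_eq (p n : ℕ) [Fact p.Prime]
    (σ τ : Equiv.Perm (Fin n → ZMod p))
    (g h : Fin n → MvPolynomial (Fin n) (ZMod p))
    (hg : IsReducedRep p n σ g) (hh : IsReducedRep p n τ h)
    (hlam : ∀ i : Fin n, MvPolynomial.coeff (topMonomial p n i) (g i) ≠ 0)
    (hmu : ∀ i : Fin n, MvPolynomial.coeff (topMonomial p n i) (h i) ≠ 0) :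
    (∃ φ : Equiv.Perm (Fin n → ZMod p),
        StrictlyTriangular p n φ ∧ φ⁻¹ * σ * φ = τ) ↔
    (∀ i : Fin n,
        MvPolynomial.coeff (topMonomial p n i) (g i) =
          MvPolynomial.coeff (topMonomial p n i) (h i)) := by
  have hp : p.Prime := Fact.out
  constructor
  · rintro ⟨φ, hφ, hconj⟩ i
    have hconj' : ∀ k : ℕ, τ ^ k = φ⁻¹ * σ ^ k * φ := by
      intro k
      calc τ ^ k = (φ⁻¹ * σ * (φ⁻¹)⁻¹) ^ k := by rw [inv_inv, hconj]
        _ = φ⁻¹ * σ ^ k * (φ⁻¹)⁻¹ := conj_pow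
        _ = φ⁻¹ * σ ^ k * φ := by rw [inv_inv]
    set i0 := (i : ℕ) with hi0
    have hσs := key_shift hg hlam i
    have hτs := key_shift hh hmu i
    have hτfix := (key hh hmu i0).1
    have happ : φ ((τ ^ p ^ i0) 0) = (σ ^ p ^ i0) (φ 0) := by
      have hmulid : φ * τ ^ p ^ i0 = σ ^ p ^ i0 * φ := by
        rw [hconj' (p ^ i0)]
        group
      calc φ ((τ ^ p ^ i0) 0) = (φ * τ ^ p ^ i0) 0 := rfl
        _ = (σ ^ p ^ i0 * φ) 0 := by rw [hmulid]
        _ = (σ ^ p ^ i0) (φ 0) := rfl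
    have h2 := hφ ((τ ^ p ^ i0) 0) 0 i (fun j hj => by simpa using hτfix 0 j hj)
    have h3 := congrFun happ i
    have h4 := hσs (φ 0)
    have h5 := hτs 0
    simp only [Pi.zero_apply] at h2 h5
    have hcc : cc g i = cc h i := by linear_combination h2 + h5 - h3 - h4
    have hne : ((-1 : ZMod p)) ^ i0 ≠ 0 := pow_ne_zero _ (neg_ne_zero.mpr one_ne_zero)
    simp only [cc] at hcc
    exact mul_left_cancel₀ hne hcc
  · intro hco
    have hccs : ∀ i : Fin n, cc g i = cc h i := fun i => by rw [cc, cc, hco i]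
    have hσ1 : σ ^ p ^ n = 1 := pow_pn_eq_one hg hlam
    have hτ1 : τ ^ p ^ n = 1 := pow_pn_eq_one hh hmu
    have hτtr : ∀ y, ∃ m, m < p ^ n ∧ (τ ^ m) 0 = y := fun y => orbit_trans hh hmu 0 y
    have hσtr : ∀ y, ∃ m, m < p ^ n ∧ (σ ^ m) 0 = y := fun y => orbit_trans hg hlam 0 y
    choose kτ hkτlt hkτ using hτtr
    choose kσ hkσlt hkσ using hσtr
    have hτinjN : ∀ a b : ℕ, a < p ^ n → b < p ^ n → (τ ^ a) 0 = (τ ^ b) 0 → a = b :=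
      fun a b ha hb hab =>
        orbit_inj hmu (fun j _ => key hh hmu j) le_rfl 0 a b ha hb fun j _ => congrFun hab j
    have hσinjN : ∀ a b : ℕ, a < p ^ n → b < p ^ n → (σ ^ a) 0 = (σ ^ b) 0 → a = b :=
      fun a b ha hb hab =>
        orbit_inj hlam (fun j _ => key hg hlam j) le_rfl 0 a b ha hb fun j _ => congrFun hab j
    have hNpos : 0 < p ^ n := pow_pos hp.pos n
    have hW : ∀ a b : ℕ, (τ ^ a) 0 = (τ ^ b) 0 → (σ ^ a) 0 = (σ ^ b) 0 := by
      intro a b hab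
      rw [pow_mod_pn hτ1 a, pow_mod_pn hτ1 b] at hab
      have h2 : a % p ^ n = b % p ^ n :=
        hτinjN _ _ (Nat.mod_lt _ hNpos) (Nat.mod_lt _ hNpos) hab
      rw [pow_mod_pn hσ1 a, pow_mod_pn hσ1 b, h2]
    set φ0 : (Fin n → ZMod p) → (Fin n → ZMod p) := fun y => (σ ^ kτ y) 0 with hφ0
    set ψ0 : (Fin n → ZMod p) → (Fin n → ZMod p) := fun y => (τ ^ kσ y) 0 with hψ0
    have hleft : ∀ y, ψ0 (φ0 y) = y := by
      intro y
      have h1 : (σ ^ kσ (φ0 y)) 0 = (σ ^ kτ y) 0 := hkσ (φ0 y)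
      have h2 : kσ (φ0 y) = kτ y := hσinjN _ _ (hkσlt _) (hkτlt _) h1
      show (τ ^ kσ (φ0 y)) 0 = y
      rw [h2, hkτ y]
    have hright : ∀ y, φ0 (ψ0 y) = y := by
      intro y
      have h1 : (τ ^ kτ (ψ0 y)) 0 = (τ ^ kσ y) 0 := hkτ (ψ0 y)
      have h2 : kτ (ψ0 y) = kσ y := hτinjN _ _ (hkτlt _) (hkσlt _) h1
      show (σ ^ kτ (ψ0 y)) 0 = y
      rw [h2, hkσ y]
    refine ⟨⟨φ0, ψ0, hleft, hright⟩, ?_, ?_⟩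
    · -- strictly triangular
      intro x y i hxy
      set i0 := (i : ℕ) with hi0d
      have hdxσ := decomp hg hlam (kτ x) i
      have hdxτ := decomp hh hmu (kτ x) i
      have hdyσ := decomp hg hlam (kτ y) i
      have hdyτ := decomp hh hmu (kτ y) i
      have hx0 : (τ ^ kτ x) 0 = x := hkτ x
      have hy0 : (τ ^ kτ y) 0 = y := hkτ y
      have hagree : ∀ j : Fin n, (j : ℕ) < i0 → (τ ^ (kτ x % p ^ i0)) 0 j
          = (τ ^ (kτ y % p ^ i0)) 0 j := by
        intro j hj
        have hj' : j < i := hj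
        rw [← hdxτ.1 j hj', ← hdyτ.1 j hj', hx0, hy0]
        exact hxy j hj'
      have hipos : 0 < p ^ i0 := pow_pos hp.pos i0
      have hreq : kτ x % p ^ i0 = kτ y % p ^ i0 :=
        orbit_inj hmu (fun j _ => key hh hmu j) i.isLt.le 0 _ _
          (Nat.mod_lt _ hipos) (Nat.mod_lt _ hipos) hagree
      have e1 := hdxσ.2
      have e2 := hdxτ.2
      have e3 := hdyσ.2
      have e4 := hdyτ.2
      rw [hx0] at e2
      rw [hy0] at e4
      rw [hreq] at e1 e2
      rw [← hccs i] at e2 e4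
      show (σ ^ kτ x) 0 i - x i = (σ ^ kτ y) 0 i - y i
      linear_combination e1 - e2 - e3 + e4
    · -- conjugation
      refine Equiv.ext fun x => ?_
      have hmain : σ (φ0 x) = φ0 (τ x) := by
        have h1 : (τ ^ (kτ (τ x))) 0 = (τ ^ (kτ x + 1)) 0 := by
          rw [hkτ (τ x), pow_succ', Equiv.Perm.mul_apply, hkτ x]
        have h2 := hW _ _ h1
        show σ ((σ ^ kτ x) 0) = (σ ^ kτ (τ x)) 0
        rw [h2, pow_succ', Equiv.Perm.mul_apply]
      simp only [Equiv.Perm.mul_apply]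
      show Equiv.symm ⟨φ0, ψ0, hleft, hright⟩ (σ (φ0 x)) = τ x
      rw [hmain]
      exact hleft (τ x)
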